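/- Let D and Z be disjoint finite subsets of {1, …, n+1} with 2|D| + |Z| = 2k + r, write M = |Z|, and let ι be an r-admissible involution of Z. Then the set of all symbols Σ = (β, γ) ∈ Sy(n,k,r) such that β ∩ γ = D, (β ∪ γ) ∖ D = Z, and for each nontrivial orbit {z, z′} of ι one of z, z′ lies in β and the other in γ, has cardinality exactly 2^{(M−r)/2}. Moreover for every such symbol all r fixed points of ι lie in β. -/
import Mathlib


namespace LM2003

open scoped BigOperators

/-- `(β, γ)` is a symbol in `Sy(n,k,r)`: two finite sets of integers contained in
`{1, …, n+1}`, of cardinalities `k+r` and `k` (rows are identified with the subsets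
they enumerate; strict increase is automatic). -/
def IsSymbol (n k r : ℕ) (β γ : Finset ℤ) : Prop :=
  β ⊆ Finset.Icc 1 ((n : ℤ) + 1) ∧ γ ⊆ Finset.Icc 1 ((n : ℤ) + 1) ∧
    β.card = k + r ∧ γ.card = k

/-- `(β,γ)` is standard: for each `i < |γ|`, the `i`-th smallest element of `β`
is `≤` the `i`-th smallest element of `γ`. -/
def IsStandard (β γ : Finset ℤ) : Prop :=
  ∀ i : ℕ, i < γ.card → (β.sort (· ≤ ·))[i]! ≤ (γ.sort (· ≤ ·))[i]!

/-- Accumulated data after level `l` of the recursive definition of `ψ`: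
the first component is `γ⁰ ∪ ⋯ ∪ γ^l` and the second is `ψ(γ⁰ ∪ ⋯ ∪ γ^l)`. -/
def psiAcc (β γ : Finset ℤ) : ℕ → Finset ℤ × Finset ℤ
  | 0 => (γ ∩ β, γ ∩ β)
  | l + 1 =>
    let p := psiAcc β γ l
    let g := (γ \ p.1).filter fun j => j - ((l : ℤ) + 1) ∈ β \ p.2
    (p.1 ∪ g, p.2 ∪ g.image fun j => j - ((l : ℤ) + 1))

/-- The level sets `γ^l` in the recursive definition of `ψ`. -/
def gammaL (β γ : Finset ℤ) : ℕ → Finset ℤ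
  | 0 => γ ∩ β
  | l + 1 =>
    (γ \ (psiAcc β γ l).1).filter fun j => j - ((l : ℤ) + 1) ∈ β \ (psiAcc β γ l).2

open Classical in
/-- The map `ψ` : for `j ∈ γ^l` it is `j ↦ j - l` (via the least such `l`),
and the identity elsewhere. -/
noncomputable def psiS (β γ : Finset ℤ) (j : ℤ) : ℤ :=
  if h : ∃ l, j ∈ gammaL β γ l then j - (Nat.find h : ℤ) else j

/-- The pairs of a (standard) symbol: the pairs `(j, ψ(j))` with `j ∈ γ` and `ψ(j) ≠ j`. -/
noncomputable def pairsS (β γ : Finset ℤ) : Finset (ℤ × ℤ) :=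
  (γ.filter fun j => psiS β γ j ≠ j).image fun j => (j, psiS β γ j)

/-- Exchanging, for every pair in `T`, the two members between the two rows of `(β,γ)`
(reordering of rows is automatic for sets). Pairs are written `(j, ψ j)` with `j` in the
bottom row `γ` and `ψ j` in the top row `β`. -/
def swapSymbol (β γ : Finset ℤ) (T : Finset (ℤ × ℤ)) : Finset ℤ × Finset ℤ :=
  ((β \ T.image Prod.snd) ∪ T.image Prod.fst,
   (γ \ T.image Prod.fst) ∪ T.image Prod.snd)

/-- The class `C(S)` of a standard symbol: all symbols obtained by permuting a subset
of its pairs. -/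
noncomputable def CSet (β γ : Finset ℤ) : Finset (Finset ℤ × Finset ℤ) :=
  (pairsS β γ).powerset.image (swapSymbol β γ)

/-- The Fock space `F(Λ)`: free `ℚ(v)`-module on the set of all symbols. -/
abbrev FF : Type := (Finset ℤ × Finset ℤ) →₀ RatFunc ℚ

/-- Standard basis vector `u_S`. -/
noncomputable def uS (S : Finset ℤ × Finset ℤ) : FF := Finsupp.single S 1

/-- The variable `v` of `K = ℚ(v)`. -/
noncomputable def vv : RatFunc ℚ := RatFunc.X

/-- Action of the Chevalley generator `f_j` on the standard basis vector `u_S`. -/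
noncomputable def fAct (j : ℤ) (S : Finset ℤ × Finset ℤ) : FF :=
  (if j ∈ S.2 ∧ j + 1 ∉ S.2 then uS (S.1, insert (j + 1) (S.2.erase j)) else 0) +
  (if j ∈ S.1 ∧ j + 1 ∉ S.1 then
      vv ^ ((if j ∈ S.2 then (1 : ℤ) else 0) - (if j + 1 ∈ S.2 then (1 : ℤ) else 0)) •
        uS (insert (j + 1) (S.1.erase j), S.2)
    else 0)

/-- The Chevalley generator `f_j` as a linear operator on `F`. -/
noncomputable def fLin (j : ℤ) : FF →ₗ[RatFunc ℚ] FF :=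
  Finsupp.lsum (RatFunc ℚ) fun S => LinearMap.toSpanSingleton (RatFunc ℚ) FF (fAct j S)

/-- Divided powers: `f_j^{(1)} = f_j`, `f_j^{(2)} = f_j² / (v + v⁻¹)`. -/
noncomputable def fDiv (j : ℤ) (m : ℕ) : FF →ₗ[RatFunc ℚ] FF :=
  if m = 2 then (vv + vv⁻¹)⁻¹ • (fLin j ∘ₗ fLin j) else fLin j

/-- `b_S = Σ_{Σ ∈ C(S)} v^{n(Σ)} u_Σ`, written as a sum over the subsets `T` of the
set of pairs of `S` (with `n(Σ) = |T|`). -/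
noncomputable def bS (β γ : Finset ℤ) : FF :=
  ∑ T ∈ (pairsS β γ).powerset, vv ^ T.card • uS (swapSymbol β γ T)

/-- `ι` is an involution of the finite set `Z`. -/
def IsInvolutionOn (Z : Finset ℤ) (ι : ℤ → ℤ) : Prop :=
  (∀ z ∈ Z, ι z ∈ Z) ∧ ∀ z ∈ Z, ι (ι z) = z

/-- `z < z'` are consecutive elements of `Z`. -/
def ConsecutiveIn (Z : Finset ℤ) (z z' : ℤ) : Prop :=
  z ∈ Z ∧ z' ∈ Z ∧ z < z' ∧ ∀ x ∈ Z, ¬(z < x ∧ x < z')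

/-- `r`-admissible involutions of a finite set `Z` of integers: `ι` is an involution of
`Z` with exactly `r` fixed points, and either `|Z| = r`, or there are two consecutive
elements `z < z'` of `Z` with `ι z = z'` whose removal again yields an `r`-admissible
involution. -/
inductive IsAdmissible (r : ℕ) : Finset ℤ → (ℤ → ℤ) → Prop
  | base (Z : Finset ℤ) (ι : ℤ → ℤ) (hinv : IsInvolutionOn Z ι)
      (hfix : (Z.filter fun z => ι z = z).card = r) (hcard : Z.card = r) :
      IsAdmissible r Z ι
  | step (Z : Finset ℤ) (ι : ℤ → ℤ) (z z' : ℤ) (hinv : IsInvolutionOn Z ι)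
      (hfix : (Z.filter fun w => ι w = w).card = r)
      (hcons : ConsecutiveIn Z z z') (hzz : ι z = z')
      (hrec : IsAdmissible r (Z \ {z, z'}) ι) :
      IsAdmissible r Z ι

/-- `c_j(S)`: number of occurrences of `j` among the entries of the symbol `(β,γ)`. -/
def contentS (β γ : Finset ℤ) (j : ℤ) : ℕ :=
  (if j ∈ β then 1 else 0) + (if j ∈ γ then 1 else 0)

/-- given disjoint `D, Z ⊆ {1,…,n+1}` with `2|D| + |Z| = 2k + r`,
`M = |Z|`, and an `r`-admissible involution `ι` of `Z`, the set of symbols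
`Σ = (β,γ) ∈ Sy(n,k,r)` with `β ∩ γ = D`, `(β ∪ γ) ∖ D = Z` splitting every
nontrivial orbit of `ι` between the two rows has cardinality `2^{(M-r)/2}`; moreover
every such symbol contains all `r` fixed points of `ι` in its top row `β`. -/
theorem statement12 (n k r : ℕ) (hn : 2 ≤ n) (hk : 1 ≤ k) (hkr : k + r ≤ n)
    (D Z : Finset ℤ) (ι : ℤ → ℤ)
    (hD : D ⊆ Finset.Icc 1 ((n : ℤ) + 1)) (hZ : Z ⊆ Finset.Icc 1 ((n : ℤ) + 1))
    (hdisj : Disjoint D Z) (hcard : 2 * D.card + Z.card = 2 * k + r)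
    (hadm : IsAdmissible r Z ι) :
    { p : Finset ℤ × Finset ℤ |
        IsSymbol n k r p.1 p.2 ∧ p.1 ∩ p.2 = D ∧ (p.1 ∪ p.2) \ D = Z ∧
        ∀ z ∈ Z, ι z ≠ z →
          ((z ∈ p.1 ∧ ι z ∈ p.2) ∨ (z ∈ p.2 ∧ ι z ∈ p.1)) }.ncard =
      2 ^ ((Z.card - r) / 2) ∧
    ∀ p : Finset ℤ × Finset ℤ,
      (IsSymbol n k r p.1 p.2 ∧ p.1 ∩ p.2 = D ∧ (p.1 ∪ p.2) \ D = Z ∧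
        ∀ z ∈ Z, ι z ≠ z →
          ((z ∈ p.1 ∧ ι z ∈ p.2) ∨ (z ∈ p.2 ∧ ι z ∈ p.1))) →
      ∀ z ∈ Z, ι z = z → z ∈ p.1 := by
  classical
  obtain ⟨⟨hι1, hι2⟩, hfix⟩ : IsInvolutionOn Z ι ∧ (Z.filter fun z => ι z = z).card = r := by
    cases hadm with
    | base Z ι hinv hfix hcard => exact ⟨hinv, hfix⟩
    | step Z ι z z' hinv hfix hcons hzz hrec => exact ⟨hinv, hfix⟩
  have hinj : ∀ a ∈ Z, ∀ b ∈ Z, ι a = ι b → a = b := by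
    intro a ha b hb h
    rw [← hι2 a ha, h, hι2 b hb]
  set F := Z.filter (fun z => ι z = z) with hFdef
  set P := Z.filter (fun z => z < ι z) with hPdef
  set Q := Z.filter (fun z => ι z < z) with hQdef
  have hPZ : P ⊆ Z := Finset.filter_subset _ _
  have hQZ : Q ⊆ Z := Finset.filter_subset _ _
  have hFZ : F ⊆ Z := Finset.filter_subset _ _
  have hPlt : ∀ x ∈ P, x < ι x := fun x hx => (Finset.mem_filter.mp hx).2
  have hQlt : ∀ x ∈ Q, ι x < x := fun x hx => (Finset.mem_filter.mp hx).2
  have hFeq : ∀ x ∈ F, ι x = x := fun x hx => (Finset.mem_filter.mp hx).2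
  have hPQ : ∀ z ∈ P, ι z ∈ Q := by
    intro z hz
    rw [hPdef, Finset.mem_filter] at hz
    rw [hQdef, Finset.mem_filter]
    exact ⟨hι1 z hz.1, by rw [hι2 z hz.1]; exact hz.2⟩
  have hQP : ∀ z ∈ Q, ι z ∈ P := by
    intro z hz
    rw [hQdef, Finset.mem_filter] at hz
    rw [hPdef, Finset.mem_filter]
    exact ⟨hι1 z hz.1, by rw [hι2 z hz.1]; exact hz.2⟩
  have hQeq : Q = P.image ι := by
    ext x
    simp only [Finset.mem_image]
    constructor
    · intro hx
      exact ⟨ι x, hQP x hx, hι2 x (hQZ hx)⟩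
    · rintro ⟨w, hw, rfl⟩
      exact hPQ w hw
  have hinjon : ∀ (s : Finset ℤ), s ⊆ Z → (s.image ι).card = s.card := by
    intro s hs
    apply Finset.card_image_of_injOn
    intro a ha b hb h
    exact hinj a (hs (Finset.mem_coe.mp ha)) b (hs (Finset.mem_coe.mp hb)) h
  have hQcard : Q.card = P.card := by rw [hQeq, hinjon P hPZ]
  have hZdecomp : F ∪ P ∪ Q = Z := by
    ext x
    simp only [Finset.mem_union, hFdef, hPdef, hQdef, Finset.mem_filter]
    constructor
    · rintro ((h | h) | h) <;> exact h.1
    · intro hx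
      rcases lt_trichotomy x (ι x) with h | h | h
      · exact Or.inl (Or.inr ⟨hx, h⟩)
      · exact Or.inl (Or.inl ⟨hx, h.symm⟩)
      · exact Or.inr ⟨hx, h⟩
  have hdFP : Disjoint F P := by
    rw [Finset.disjoint_left]
    intro a ha hb
    have h1 := hFeq a ha
    have h2 := hPlt a hb
    omega
  have hdFQ : Disjoint F Q := by
    rw [Finset.disjoint_left]
    intro a ha hb
    have h1 := hFeq a ha
    have h2 := hQlt a hb
    omega
  have hdPQ : Disjoint P Q := by
    rw [Finset.disjoint_left]
    intro a ha hb
    have h1 := hPlt a ha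
    have h2 := hQlt a hb
    omega
  have hZcard : Z.card = r + 2 * P.card := by
    rw [← hZdecomp,
      Finset.card_union_of_disjoint (Finset.disjoint_union_left.mpr ⟨hdFQ, hdPQ⟩),
      Finset.card_union_of_disjoint hdFP, hfix, hQcard]
    ring
  have hDZ : ∀ x ∈ D, x ∉ Z := fun x hx => Finset.disjoint_left.mp hdisj hx
  have hdDZ : ∀ (s : Finset ℤ), s ⊆ Z → Disjoint D s := fun s hs => hdisj.mono_right hs
  have hDPk : D.card + P.card = k := by omega
  -- basic structural facts about any symbol in the set
  have hbasic : ∀ β γ : Finset ℤ,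
      IsSymbol n k r β γ → β ∩ γ = D → (β ∪ γ) \ D = Z →
      (∀ z ∈ Z, ι z ≠ z → ((z ∈ β ∧ ι z ∈ γ) ∨ (z ∈ γ ∧ ι z ∈ β))) →
      (D ⊆ β) ∧ (D ⊆ γ) ∧ (∀ z ∈ Z, ¬(z ∈ β ∧ z ∈ γ)) ∧ (∀ z ∈ Z, z ∈ β ∨ z ∈ γ) ∧
        (∀ x ∈ β, x ∈ D ∨ x ∈ Z) ∧ (∀ x ∈ γ, x ∈ D ∨ x ∈ Z) ∧ F ⊆ β := by
    intro β γ hsym hcap hcup hsplit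
    obtain ⟨hβI, hγI, hβc, hγc⟩ := hsym
    have hDβ : D ⊆ β := by rw [← hcap]; exact Finset.inter_subset_left
    have hDγ : D ⊆ γ := by rw [← hcap]; exact Finset.inter_subset_right
    have hnot : ∀ z ∈ Z, ¬(z ∈ β ∧ z ∈ γ) := by
      rintro z hz ⟨h1, h2⟩
      have hd : z ∈ D := by rw [← hcap]; exact Finset.mem_inter.mpr ⟨h1, h2⟩
      exact hDZ z hd hz
    have hrow : ∀ z ∈ Z, z ∈ β ∨ z ∈ γ := by
      intro z hz
      have h : z ∈ (β ∪ γ) \ D := hcup ▸ hz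
      exact Finset.mem_union.mp (Finset.mem_sdiff.mp h).1
    have hβDZ : ∀ x ∈ β, x ∈ D ∨ x ∈ Z := by
      intro x hx
      by_cases hd : x ∈ D
      · exact Or.inl hd
      · refine Or.inr ?_
        rw [← hcup]
        exact Finset.mem_sdiff.mpr ⟨Finset.mem_union_left _ hx, hd⟩
    have hγDZ : ∀ x ∈ γ, x ∈ D ∨ x ∈ Z := by
      intro x hx
      by_cases hd : x ∈ D
      · exact Or.inl hd
      · refine Or.inr ?_
        rw [← hcup]
        exact Finset.mem_sdiff.mpr ⟨Finset.mem_union_right _ hx, hd⟩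
    -- the fixed points all lie in β, by a cardinality argument
    set Bn := Z.filter (fun z => ι z ≠ z ∧ z ∈ β) with hBn
    set Gn := Z.filter (fun z => ι z ≠ z ∧ z ∈ γ) with hGn
    have hBnGn : Bn.card = Gn.card := by
      apply Finset.card_bij (fun z _ => ι z)
      · intro z hz
        rw [hBn, Finset.mem_filter] at hz
        obtain ⟨hzZ, hne, hzβ⟩ := hz
        rw [hGn, Finset.mem_filter]
        refine ⟨hι1 z hzZ, by rw [hι2 z hzZ]; exact fun h => hne h.symm, ?_⟩
        rcases hsplit z hzZ hne with ⟨_, h⟩ | ⟨h1, _⟩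
        · exact h
        · exact absurd ⟨hzβ, h1⟩ (hnot z hzZ)
      · intro a ha b hb h
        rw [hBn, Finset.mem_filter] at ha hb
        exact hinj a ha.1 b hb.1 h
      · intro g hg
        rw [hGn, Finset.mem_filter] at hg
        obtain ⟨hgZ, hne, hgγ⟩ := hg
        refine ⟨ι g, ?_, hι2 g hgZ⟩
        rw [hBn, Finset.mem_filter]
        refine ⟨hι1 g hgZ, by rw [hι2 g hgZ]; exact fun h => hne h.symm, ?_⟩
        rcases hsplit g hgZ hne with ⟨h1, _⟩ | ⟨_, h2⟩
        · exact absurd ⟨h1, hgγ⟩ (hnot g hgZ)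
        · exact h2
    have hBnGnU : Bn ∪ Gn = P ∪ Q := by
      ext x
      simp only [Finset.mem_union, hBn, hGn, hPdef, hQdef, Finset.mem_filter]
      constructor
      · rintro (⟨hxZ, hne, _⟩ | ⟨hxZ, hne, _⟩) <;>
        · rcases lt_trichotomy x (ι x) with h | h | h
          · exact Or.inl ⟨hxZ, h⟩
          · exact absurd h.symm hne
          · exact Or.inr ⟨hxZ, h⟩
      · rintro (⟨hxZ, h⟩ | ⟨hxZ, h⟩) <;>
        · have hne : ι x ≠ x := by omega
          rcases hrow x hxZ with hx | hx
          · exact Or.inl ⟨hxZ, hne, hx⟩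
          · exact Or.inr ⟨hxZ, hne, hx⟩
    have hdBG : Disjoint Bn Gn := by
      rw [Finset.disjoint_left]
      intro a ha hb
      rw [hBn, Finset.mem_filter] at ha
      rw [hGn, Finset.mem_filter] at hb
      exact hnot a ha.1 ⟨ha.2.2, hb.2.2⟩
    have hBncard : Bn.card = P.card := by
      have h1 : Bn.card + Gn.card = P.card + Q.card := by
        rw [← Finset.card_union_of_disjoint hdBG, ← Finset.card_union_of_disjoint hdPQ, hBnGnU]
      omega
    have hβdec : β = D ∪ (F ∩ β) ∪ Bn := by
      ext x
      simp only [Finset.mem_union, Finset.mem_inter, hBn, hFdef, Finset.mem_filter]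
      constructor
      · intro hx
        rcases hβDZ x hx with hd | hz
        · exact Or.inl (Or.inl hd)
        · by_cases hf : ι x = x
          · exact Or.inl (Or.inr ⟨⟨hz, hf⟩, hx⟩)
          · exact Or.inr ⟨hz, hf, hx⟩
      · rintro ((hd | ⟨_, hx⟩) | ⟨_, _, hx⟩)
        · exact hDβ hd
        · exact hx
        · exact hx
    have hcards : D.card + (F ∩ β).card + Bn.card = k + r := by
      have d1 : Disjoint (D ∪ F ∩ β) Bn := by
        refine Finset.disjoint_union_left.mpr ⟨hdDZ _ ?_, ?_⟩
        · rw [hBn]; exact Finset.filter_subset _ _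
        · rw [Finset.disjoint_left]
          intro a ha hb
          have h1 := hFeq a (Finset.mem_inter.mp ha).1
          rw [hBn, Finset.mem_filter] at hb
          exact hb.2.1 h1
      have d2 : Disjoint D (F ∩ β) := hdDZ _ ((Finset.inter_subset_left).trans hFZ)
      have e : β.card = D.card + (F ∩ β).card + Bn.card := by
        conv_lhs => rw [hβdec]
        rw [Finset.card_union_of_disjoint d1, Finset.card_union_of_disjoint d2]
      omega
    have hFβcard : (F ∩ β).card = r := by omega
    have hFβ : F ∩ β = F := by
      apply Finset.eq_of_subset_of_card_le Finset.inter_subset_left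
      rw [hFβcard, hfix]
    refine ⟨hDβ, hDγ, hnot, hrow, hβDZ, hγDZ, ?_⟩
    intro x hx
    rw [← hFβ] at hx
    exact (Finset.mem_inter.mp hx).2
  -- the parametrizing map
  set m : Finset ℤ → Finset ℤ × Finset ℤ :=
    fun T => (D ∪ F ∪ T ∪ (P \ T).image ι, D ∪ (P \ T) ∪ T.image ι) with hm
  have hB : ∀ (T : Finset ℤ) (x : ℤ),
      x ∈ (m T).1 ↔ (x ∈ D ∨ x ∈ F ∨ x ∈ T ∨ x ∈ (P \ T).image ι) := by
    intro T x
    simp only [hm, Finset.mem_union]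
    tauto
  have hG : ∀ (T : Finset ℤ) (x : ℤ),
      x ∈ (m T).2 ↔ (x ∈ D ∨ x ∈ (P \ T) ∨ x ∈ T.image ι) := by
    intro T x
    simp only [hm, Finset.mem_union]
    tauto
  -- forward: every m T with T ⊆ P is in the set
  have hmem : ∀ T ⊆ P, IsSymbol n k r (m T).1 (m T).2 ∧ (m T).1 ∩ (m T).2 = D ∧
      ((m T).1 ∪ (m T).2) \ D = Z ∧
      ∀ z ∈ Z, ι z ≠ z → ((z ∈ (m T).1 ∧ ι z ∈ (m T).2) ∨ (z ∈ (m T).2 ∧ ι z ∈ (m T).1)) := by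
    intro T hT
    have hT1 : (P \ T).image ι ⊆ Q := by
      intro x hx
      obtain ⟨w, hw, rfl⟩ := Finset.mem_image.mp hx
      exact hPQ w (Finset.mem_sdiff.mp hw).1
    have hT2 : T.image ι ⊆ Q := by
      intro x hx
      obtain ⟨w, hw, rfl⟩ := Finset.mem_image.mp hx
      exact hPQ w (hT hw)
    have hTP : T ⊆ Z := hT.trans hPZ
    have hTle : T.card ≤ P.card := Finset.card_le_card hT
    have hβsub : ∀ x ∈ (m T).1, x ∈ D ∨ x ∈ Z := by
      intro x hx
      rcases (hB T x).mp hx with h | h | h | h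
      · exact Or.inl h
      · exact Or.inr (hFZ h)
      · exact Or.inr (hTP h)
      · exact Or.inr (hQZ (hT1 h))
    have hγsub : ∀ x ∈ (m T).2, x ∈ D ∨ x ∈ Z := by
      intro x hx
      rcases (hG T x).mp hx with h | h | h
      · exact Or.inl h
      · exact Or.inr (hPZ (Finset.mem_sdiff.mp h).1)
      · exact Or.inr (hQZ (hT2 h))
    have hβcard : (m T).1.card = k + r := by
      have d1 : Disjoint (D ∪ F ∪ T) ((P \ T).image ι) := by
        refine Finset.disjoint_union_left.mpr ⟨Finset.disjoint_union_left.mpr ⟨?_, ?_⟩, ?_⟩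
        · exact hdDZ _ (hT1.trans hQZ)
        · exact hdFQ.mono_right hT1
        · exact hdPQ.mono hT hT1
      have d2 : Disjoint (D ∪ F) T := Finset.disjoint_union_left.mpr
        ⟨hdDZ _ hTP, hdFP.mono_right hT⟩
      have d3 : Disjoint D F := hdDZ _ hFZ
      have him : ((P \ T).image ι).card = P.card - T.card := by
        rw [hinjon _ ((Finset.sdiff_subset).trans hPZ), Finset.card_sdiff_of_subset hT]
      show (D ∪ F ∪ T ∪ (P \ T).image ι).card = k + r
      rw [Finset.card_union_of_disjoint d1, Finset.card_union_of_disjoint d2,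
        Finset.card_union_of_disjoint d3, him, hfix]
      omega
    have hγcard : (m T).2.card = k := by
      have d1 : Disjoint (D ∪ (P \ T)) (T.image ι) := by
        refine Finset.disjoint_union_left.mpr ⟨?_, ?_⟩
        · exact hdDZ _ (hT2.trans hQZ)
        · exact hdPQ.mono (Finset.sdiff_subset) hT2
      have d2 : Disjoint D (P \ T) := hdDZ _ ((Finset.sdiff_subset).trans hPZ)
      have him : (T.image ι).card = T.card := hinjon _ hTP
      show (D ∪ (P \ T) ∪ T.image ι).card = k
      rw [Finset.card_union_of_disjoint d1, Finset.card_union_of_disjoint d2,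
        Finset.card_sdiff_of_subset hT, him]
      omega
    refine ⟨⟨?_, ?_, hβcard, hγcard⟩, ?_, ?_, ?_⟩
    · intro x hx
      rcases hβsub x hx with h | h
      · exact hD h
      · exact hZ h
    · intro x hx
      rcases hγsub x hx with h | h
      · exact hD h
      · exact hZ h
    · -- intersection is D
      apply Finset.Subset.antisymm
      · intro x hx
        obtain ⟨hx1, hx2⟩ := Finset.mem_inter.mp hx
        rcases (hB T x).mp hx1 with hd | hf | ht | him1
        · exact hd
        · exfalso
          rcases (hG T x).mp hx2 with hd | hp | him2
          · exact hDZ x hd (hFZ hf)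
          · have := hFeq x hf; have := hPlt x (Finset.mem_sdiff.mp hp).1; omega
          · have := hFeq x hf; have := hQlt x (hT2 him2); omega
        · exfalso
          rcases (hG T x).mp hx2 with hd | hp | him2
          · exact hDZ x hd (hTP ht)
          · exact (Finset.mem_sdiff.mp hp).2 ht
          · have := hPlt x (hT ht); have := hQlt x (hT2 him2); omega
        · exfalso
          rcases (hG T x).mp hx2 with hd | hp | him2
          · exact hDZ x hd (hQZ (hT1 him1))
          · have := hQlt x (hT1 him1); have := hPlt x (Finset.mem_sdiff.mp hp).1; omega
          · obtain ⟨a, ha, hax⟩ := Finset.mem_image.mp him1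
            obtain ⟨b, hb, hbx⟩ := Finset.mem_image.mp him2
            have hab : a = b := hinj a (hPZ (Finset.mem_sdiff.mp ha).1) b (hTP hb) (by rw [hax, hbx])
            exact (Finset.mem_sdiff.mp ha).2 (hab ▸ hb)
      · intro x hx
        exact Finset.mem_inter.mpr ⟨(hB T x).mpr (Or.inl hx), (hG T x).mpr (Or.inl hx)⟩
    · -- union minus D is Z
      have hU : ∀ x, (x ∈ (m T).1 ∨ x ∈ (m T).2) ↔ (x ∈ D ∨ x ∈ Z) := by
        intro x
        constructor
        · rintro (h | h)
          · exact hβsub x h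
          · exact hγsub x h
        · rintro (h | h)
          · exact Or.inl ((hB T x).mpr (Or.inl h))
          · rw [← hZdecomp] at h
            rcases Finset.mem_union.mp h with h' | hq
            · rcases Finset.mem_union.mp h' with hf | hp
              · exact Or.inl ((hB T x).mpr (Or.inr (Or.inl hf)))
              · by_cases ht : x ∈ T
                · exact Or.inl ((hB T x).mpr (Or.inr (Or.inr (Or.inl ht))))
                · exact Or.inr ((hG T x).mpr (Or.inr (Or.inl (Finset.mem_sdiff.mpr ⟨hp, ht⟩))))
            · rw [hQeq] at hq
              obtain ⟨w, hw, rfl⟩ := Finset.mem_image.mp hq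
              by_cases ht : w ∈ T
              · exact Or.inr ((hG T (ι w)).mpr (Or.inr (Or.inr (Finset.mem_image.mpr ⟨w, ht, rfl⟩))))
              · exact Or.inl ((hB T (ι w)).mpr (Or.inr (Or.inr (Or.inr
                  (Finset.mem_image.mpr ⟨w, Finset.mem_sdiff.mpr ⟨hw, ht⟩, rfl⟩)))))
      ext x
      rw [Finset.mem_sdiff, Finset.mem_union]
      constructor
      · rintro ⟨h, hd⟩
        rcases (hU x).mp h with h' | h'
        · exact absurd h' hd
        · exact h'
      · intro hx
        exact ⟨(hU x).mpr (Or.inr hx), fun hd => hDZ x hd hx⟩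
    · -- split condition
      intro z hz hne
      have hzq : z ∈ P ∨ z ∈ Q := by
        rw [hPdef, hQdef, Finset.mem_filter, Finset.mem_filter]
        rcases lt_trichotomy z (ι z) with h | h | h
        · exact Or.inl ⟨hz, h⟩
        · exact absurd h.symm hne
        · exact Or.inr ⟨hz, h⟩
      rcases hzq with hp | hq
      · by_cases ht : z ∈ T
        · refine Or.inl ⟨(hB T z).mpr (Or.inr (Or.inr (Or.inl ht))),
            (hG T (ι z)).mpr (Or.inr (Or.inr (Finset.mem_image.mpr ⟨z, ht, rfl⟩)))⟩
        · refine Or.inr ⟨(hG T z).mpr (Or.inr (Or.inl (Finset.mem_sdiff.mpr ⟨hp, ht⟩))),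
            (hB T (ι z)).mpr (Or.inr (Or.inr (Or.inr
              (Finset.mem_image.mpr ⟨z, Finset.mem_sdiff.mpr ⟨hp, ht⟩, rfl⟩))))⟩
      · have hw : ι z ∈ P := hQP z hq
        have hzw : ι (ι z) = z := hι2 z hz
        by_cases ht : ι z ∈ T
        · refine Or.inr ⟨?_, (hB T (ι z)).mpr (Or.inr (Or.inr (Or.inl ht)))⟩
          refine (hG T z).mpr (Or.inr (Or.inr (Finset.mem_image.mpr ⟨ι z, ht, hzw⟩)))
        · refine Or.inl ⟨?_, (hG T (ι z)).mpr (Or.inr (Or.inl (Finset.mem_sdiff.mpr ⟨hw, ht⟩)))⟩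
          refine (hB T z).mpr (Or.inr (Or.inr (Or.inr
            (Finset.mem_image.mpr ⟨ι z, Finset.mem_sdiff.mpr ⟨hw, ht⟩, hzw⟩))))
  -- recovery of T from m T
  have hrecov : ∀ T ⊆ P, (m T).1 ∩ P = T := by
    intro T hT
    ext x
    rw [Finset.mem_inter, hB T x]
    constructor
    · rintro ⟨hd | hf | ht | him, hxP⟩
      · exact absurd (hPZ hxP) (hDZ x hd)
      · exact absurd hxP (Finset.disjoint_left.mp hdFP hf)
      · exact ht
      · exfalso
        obtain ⟨w, hw, hwx⟩ := Finset.mem_image.mp him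
        have hq : x ∈ Q := hwx ▸ hPQ w (Finset.mem_sdiff.mp hw).1
        exact Finset.disjoint_left.mp hdPQ hxP hq
    · intro hx
      exact ⟨Or.inr (Or.inr (Or.inl hx)), hT hx⟩
  -- surjectivity
  have hsurj : ∀ β γ : Finset ℤ, IsSymbol n k r β γ → β ∩ γ = D → (β ∪ γ) \ D = Z →
      (∀ z ∈ Z, ι z ≠ z → ((z ∈ β ∧ ι z ∈ γ) ∨ (z ∈ γ ∧ ι z ∈ β))) →
      m (β ∩ P) = (β, γ) := by
    intro β γ hsym hcap hcup hsplit
    obtain ⟨hDβ, hDγ, hnot, hrow, hβDZ, hγDZ, hFβ⟩ := hbasic β γ hsym hcap hcup hsplit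
    have h1 : (m (β ∩ P)).1 = β := by
      ext x
      rw [hB (β ∩ P) x]
      constructor
      · rintro (hd | hf | ht | him)
        · exact hDβ hd
        · exact hFβ hf
        · exact (Finset.mem_inter.mp ht).1
        · obtain ⟨w, hw, rfl⟩ := Finset.mem_image.mp him
          obtain ⟨hwP, hwT⟩ := Finset.mem_sdiff.mp hw
          have hwZ := hPZ hwP
          have hwβ : w ∉ β := fun hwb => hwT (Finset.mem_inter.mpr ⟨hwb, hwP⟩)
          have hne : ι w ≠ w := by have := hPlt w hwP; omega
          rcases hsplit w hwZ hne with ⟨hh, _⟩ | ⟨_, hh⟩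
          · exact absurd hh hwβ
          · exact hh
      · intro hx
        rcases hβDZ x hx with hd | hz
        · exact Or.inl hd
        · have hz' := hz
          rw [← hZdecomp] at hz'
          rcases Finset.mem_union.mp hz' with h' | hq
          · rcases Finset.mem_union.mp h' with hf | hp
            · exact Or.inr (Or.inl hf)
            · exact Or.inr (Or.inr (Or.inl (Finset.mem_inter.mpr ⟨hx, hp⟩)))
          · have hw : ι x ∈ P := hQP x hq
            have hne : ι x ≠ x := by have := hQlt x hq; omega
            have hιγ : ι x ∈ γ := by
              rcases hsplit x hz hne with ⟨_, hh⟩ | ⟨h1, _⟩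
              · exact hh
              · exact absurd ⟨hx, h1⟩ (hnot x hz)
            have hιβ : ι x ∉ β := fun hb => hnot (ι x) (hPZ hw) ⟨hb, hιγ⟩
            refine Or.inr (Or.inr (Or.inr (Finset.mem_image.mpr
              ⟨ι x, Finset.mem_sdiff.mpr ⟨hw, fun ht => hιβ (Finset.mem_inter.mp ht).1⟩,
                hι2 x hz⟩)))
    have h2 : (m (β ∩ P)).2 = γ := by
      ext x
      rw [hG (β ∩ P) x]
      constructor
      · rintro (hd | hp | him)
        · exact hDγ hd
        · obtain ⟨hxP, hxT⟩ := Finset.mem_sdiff.mp hp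
          have hxZ := hPZ hxP
          have hxβ : x ∉ β := fun hb => hxT (Finset.mem_inter.mpr ⟨hb, hxP⟩)
          rcases hrow x hxZ with h | h
          · exact absurd h hxβ
          · exact h
        · obtain ⟨w, hw, rfl⟩ := Finset.mem_image.mp him
          have hwβ := (Finset.mem_inter.mp hw).1
          have hwP := (Finset.mem_inter.mp hw).2
          have hwZ := hPZ hwP
          have hne : ι w ≠ w := by have := hPlt w hwP; omega
          rcases hsplit w hwZ hne with ⟨_, hh⟩ | ⟨h1, _⟩
          · exact hh
          · exact absurd ⟨hwβ, h1⟩ (hnot w hwZ)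
      · intro hx
        rcases hγDZ x hx with hd | hz
        · exact Or.inl hd
        · have hxβ : x ∉ β := fun hb => hnot x hz ⟨hb, hx⟩
          have hz' := hz
          rw [← hZdecomp] at hz'
          rcases Finset.mem_union.mp hz' with h' | hq
          · rcases Finset.mem_union.mp h' with hf | hp
            · exact absurd (hFβ hf) hxβ
            · exact Or.inr (Or.inl (Finset.mem_sdiff.mpr
                ⟨hp, fun ht => hxβ (Finset.mem_inter.mp ht).1⟩))
          · have hw : ι x ∈ P := hQP x hq
            have hne : ι x ≠ x := by have := hQlt x hq; omega
            have hιβ : ι x ∈ β := by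
              rcases hsplit x hz hne with ⟨h1, _⟩ | ⟨_, hh⟩
              · exact absurd h1 hxβ
              · exact hh
            exact Or.inr (Or.inr (Finset.mem_image.mpr
              ⟨ι x, Finset.mem_inter.mpr ⟨hιβ, hw⟩, hι2 x hz⟩))
    exact Prod.ext h1 h2
  constructor
  · -- the counting statement
    have hseq : { p : Finset ℤ × Finset ℤ |
        IsSymbol n k r p.1 p.2 ∧ p.1 ∩ p.2 = D ∧ (p.1 ∪ p.2) \ D = Z ∧
        ∀ z ∈ Z, ι z ≠ z →
          ((z ∈ p.1 ∧ ι z ∈ p.2) ∨ (z ∈ p.2 ∧ ι z ∈ p.1)) } = m '' ↑P.powerset := by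
      ext p
      simp only [Set.mem_image, Finset.mem_coe, Finset.mem_powerset, Set.mem_setOf_eq]
      constructor
      · rintro ⟨h1, h2, h3, h4⟩
        exact ⟨p.1 ∩ P, Finset.inter_subset_right, hsurj p.1 p.2 h1 h2 h3 h4⟩
      · rintro ⟨T, hT, rfl⟩
        exact hmem T hT
    have hinjOn : Set.InjOn m ↑P.powerset := by
      intro T1 h1 T2 h2 h
      have hT1 : T1 ⊆ P := Finset.mem_powerset.mp (Finset.mem_coe.mp h1)
      have hT2 : T2 ⊆ P := Finset.mem_powerset.mp (Finset.mem_coe.mp h2)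
      rw [← hrecov T1 hT1, ← hrecov T2 hT2, h]
    rw [hseq, Set.ncard_image_of_injOn hinjOn, Set.ncard_coe_finset, Finset.card_powerset]
    congr 1
    omega
  · -- the "moreover" statement
    rintro p ⟨h1, h2, h3, h4⟩ z hz hfz
    have hFβ := (hbasic p.1 p.2 h1 h2 h3 h4).2.2.2.2.2.2
    exact hFβ (by rw [hFdef, Finset.mem_filter]; exact ⟨hz, hfz⟩)
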